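/- arXiv:2310.07353 — 3 statements merged into one kernel-verified Lean document; each statement's English description precedes it below -/
import Mathlib

section
/- Fix integers m, r ≥ 1, a point a ∈ ℝ, and continuous matrix-valued functions A₀, …, A_{r−1} : ℝ → ℂ^{m×m}. The set S of all r-times continuously differentiable functions y : ℝ → ℂ^m satisfying y^{(r)}(t) + Σ_{j=1}^{r} A_{r−j}(t) y^{(r−j)}(t) = 0 for all t ∈ ℝ is a ℂ-linear subspace of the space of functions ℝ → ℂ^m, and the linear map C : y ↦ (y(a), y'(a), …, y^{(r−1)}(a)) is a bijection from S onto ℂ^{rm}; in particular S has dimension rm. -/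
/-!
With `Y = (y, y', …, y⁽ʳ⁻¹⁾)`, the order-`r` equation becomes the first-order linear system
`Y' = C(t) Y` for the companion operator `C(t) Y = (Y₁, …, Y_{r-1}, -∑ᵢ Aᵢ(t) Yᵢ)`, and the map
`y ↦ Y` identifies the solutions with the integral curves of `C`, the Cauchy map becoming
`Y ↦ Y(a)`. A linear system with continuous coefficients has exactly one global solution through
each initial value: Picard–Lindelöf gives one on every interval of length at most
`1 / (2 sup ‖C‖)`, finitely many of these glue to any compact interval, and Grönwall-type
uniqueness makes the solutions on growing intervals agree. So the Cauchy map is a linear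
bijection from the solution space onto `ℂ^{rm}`.
-/

open Set NNReal Topology Matrix

section LinearODE

variable {E : Type*} [NormedAddCommGroup E] [NormedSpace ℝ E] {B : ℝ → E →L[ℝ] E}

theorem exists_isIntegralCurveOn_Icc_of_norm_le [CompleteSpace E] (hB : Continuous B)
    {p q : ℝ} {K : ℝ≥0} (hK : ∀ t ∈ Icc p q, ‖B t‖ ≤ K) (hKpq : K * (q - p) ≤ 1 / 2)
    {t₀ : ℝ} (ht₀ : t₀ ∈ Icc p q) (x₀ : E) :
    ∃ γ, γ t₀ = x₀ ∧ IsIntegralCurveOn γ (fun t => B t) (Icc p q) := by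
  -- The solution stays in the ball of radius `‖x₀‖` around `x₀`, where `‖B t x‖ ≤ 2 K ‖x₀‖`.
  have hPL : IsPicardLindelof (fun t => B t) ⟨t₀, ht₀⟩ x₀ ‖x₀‖₊ 0 (2 * K * ‖x₀‖₊) K :=
    { lipschitzOnWith := fun t ht =>
        ((B t).lipschitzWith_of_opNorm_le (hK t ht)).lipschitzOnWith
      continuousOn := fun x _ => (hB.clm_apply continuous_const).continuousOn
      norm_le := fun t ht x hx => by
        have hx' : ‖x‖ ≤ 2 * ‖x₀‖ := by
          have htri := norm_le_insert' x x₀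
          have hball := mem_closedBall_iff_norm.mp hx
          rw [coe_nnnorm] at hball
          linarith
        calc ‖B t x‖ ≤ ‖B t‖ * ‖x‖ := (B t).le_opNorm x
          _ ≤ K * (2 * ‖x₀‖) := by gcongr; exact hK t ht
          _ = _ := by push_cast; ring
      mul_max_le := by
        have hmax : max (q - t₀) (t₀ - p) ≤ q - p :=
          max_le (by linarith [ht₀.1]) (by linarith [ht₀.2])
        push_cast
        calc 2 * K * ‖x₀‖ * max (q - t₀) (t₀ - p) = 2 * ‖x₀‖ * (K * max (q - t₀) (t₀ - p)) := by
              ring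
          _ ≤ 2 * ‖x₀‖ * (K * (q - p)) := by gcongr
          _ ≤ ‖x₀‖ - 0 := by nlinarith [norm_nonneg x₀] }
  exact hPL.exists_eq_forall_mem_Icc_hasDerivWithinAt₀

theorem IsIntegralCurveOn.ite_Icc {v : ℝ → E → E} {f g : ℝ → E} {p c q : ℝ}
    (hf : IsIntegralCurveOn f v (Icc p c)) (hg : IsIntegralCurveOn g v (Icc c q))
    (hfg : f c = g c) (hpc : p ≤ c) (hcq : c ≤ q) :
    IsIntegralCurveOn (fun t => if t ≤ c then f t else g t) v (Icc p q) := by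
  set h := fun t => if t ≤ c then f t else g t
  have hhf : EqOn h f (Icc p c) := fun t ht => if_pos ht.2
  have hhg : EqOn h g (Icc c q) := fun t ht => by
    rcases ht.1.eq_or_lt with rfl | hlt
    · simp [h, hfg]
    · simp [h, not_le.2 hlt]
  -- Off a closed set `s`, a derivative within `s` is vacuous.
  have extend : ∀ {k : ℝ → E} {s : Set ℝ}, IsClosed s → IsIntegralCurveOn k v s → EqOn h k s →
      ∀ t, HasDerivWithinAt h (v t (h t)) s t := fun {k s} hs hk hhk t => by
    by_cases ht : t ∈ s
    · rw [hhk ht]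
      exact (hk t ht).congr hhk (hhk ht)
    · exact HasFDerivWithinAt.of_notMem_closure (by rwa [hs.closure_eq])
  intro t _
  rw [← Icc_union_Icc_eq_Icc hpc hcq]
  exact (extend isClosed_Icc hf hhf t).union (extend isClosed_Icc hg hhg t)

theorem exists_isIntegralCurveOn_Icc_of_norm_le_mul [CompleteSpace E] (hB : Continuous B)
    {p : ℝ} {K : ℝ≥0} (hK0 : 0 < K) (n : ℕ) {q : ℝ} (hK : ∀ t ∈ Icc p q, ‖B t‖ ≤ K)
    (hKpq : K * (q - p) ≤ (n + 1) / 2) {t₀ : ℝ} (ht₀ : t₀ ∈ Icc p q) (x₀ : E) :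
    ∃ γ, γ t₀ = x₀ ∧ IsIntegralCurveOn γ (fun t => B t) (Icc p q) := by
  induction n generalizing q t₀ x₀ with
  | zero => exact exists_isIntegralCurveOn_Icc_of_norm_le hB hK (by simpa using hKpq) ht₀ x₀
  | succ n ih =>
    -- Split off a final piece `[c, q]` short enough for Picard–Lindelöf.
    set c := max p (q - 1 / (2 * K))
    have hpc : p ≤ c := le_max_left _ _
    have hcq : c ≤ q := max_le (ht₀.1.trans ht₀.2) (sub_le_self _ (by positivity))
    have hKcq : K * (q - c) ≤ 1 / 2 := by
      have : q - c ≤ 1 / (2 * K) := by linarith [le_max_right p (q - 1 / (2 * K))]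
      calc (K : ℝ) * (q - c) ≤ K * (1 / (2 * K)) := by gcongr
        _ = 1 / 2 := by field_simp
    have hKpc : K * (c - p) ≤ (n + 1) / 2 := by
      rcases max_cases p (q - 1 / (2 * K)) with ⟨hc, -⟩ | ⟨hc, -⟩ <;> simp only [c, hc]
      · rw [sub_self, mul_zero]
        positivity
      · have : (K : ℝ) * (1 / (2 * K)) = 1 / 2 := by field_simp
        push_cast at hKpq
        nlinarith
    have hKl : ∀ t ∈ Icc p c, ‖B t‖ ≤ K := fun t ht => hK t ⟨ht.1, ht.2.trans hcq⟩
    have hKr : ∀ t ∈ Icc c q, ‖B t‖ ≤ K := fun t ht => hK t ⟨hpc.trans ht.1, ht.2⟩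
    by_cases htc : t₀ ≤ c
    · obtain ⟨f, hf₀, hf⟩ := ih hKl hKpc ⟨ht₀.1, htc⟩ x₀
      obtain ⟨g, hgc, hg⟩ :=
        exists_isIntegralCurveOn_Icc_of_norm_le hB hKr hKcq ⟨le_rfl, hcq⟩ (f c)
      exact ⟨_, by simp [htc, hf₀], hf.ite_Icc hg hgc.symm hpc hcq⟩
    · obtain ⟨g, hg₀, hg⟩ := exists_isIntegralCurveOn_Icc_of_norm_le hB hKr hKcq
        ⟨(not_le.1 htc).le, ht₀.2⟩ x₀
      obtain ⟨f, hfc, hf⟩ := ih hKl hKpc ⟨hpc, le_rfl⟩ (g c)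
      exact ⟨_, by simp [htc, hg₀], hf.ite_Icc hg hfc hpc hcq⟩

theorem exists_isIntegralCurveOn_Icc [CompleteSpace E] (hB : Continuous B) {p q t₀ : ℝ}
    (ht₀ : t₀ ∈ Icc p q) (x₀ : E) :
    ∃ γ, γ t₀ = x₀ ∧ IsIntegralCurveOn γ (fun t => B t) (Icc p q) := by
  obtain ⟨C, hC⟩ := isCompact_Icc.exists_bound_of_continuousOn hB.norm.continuousOn
  set K := (max C 1).toNNReal
  have hK : ∀ t ∈ Icc p q, ‖B t‖ ≤ K := fun t ht =>
    (norm_norm (B t) ▸ hC t ht).trans ((le_max_left C 1).trans (Real.le_coe_toNNReal _))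
  refine exists_isIntegralCurveOn_Icc_of_norm_le_mul hB (by simp [K]) ⌈2 * K * (q - p)⌉₊ hK
    ?_ ht₀ x₀
  linarith [Nat.le_ceil (2 * K * (q - p))]

theorem IsIntegralCurveOn.eqOn_Ioo (hB : Continuous B) {f g : ℝ → E} {p q t₀ : ℝ}
    (hf : IsIntegralCurveOn f (fun t => B t) (Ioo p q))
    (hg : IsIntegralCurveOn g (fun t => B t) (Ioo p q))
    (ht₀ : t₀ ∈ Ioo p q) (h : f t₀ = g t₀) : EqOn f g (Ioo p q) := by
  obtain ⟨C, hC⟩ := isCompact_Icc.exists_bound_of_continuousOn hB.norm.continuousOn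
  have hLip : ∀ t ∈ Ioo p q, LipschitzOnWith C.toNNReal (B t) univ := fun t ht =>
    ((B t).lipschitzWith_of_opNorm_le ((norm_norm (B t) ▸ hC t (Ioo_subset_Icc_self ht)).trans
      (Real.le_coe_toNNReal C))).lipschitzOnWith
  have hderiv : ∀ {k : ℝ → E}, IsIntegralCurveOn k (fun t => B t) (Ioo p q) →
      ∀ t ∈ Ioo p q, HasDerivAt k (B t (k t)) t ∧ k t ∈ univ := fun hk t ht =>
    ⟨(hk t ht).hasDerivAt (Ioo_mem_nhds ht.1 ht.2), trivial⟩
  exact ODE_solution_unique_of_mem_Ioo hLip ht₀ (hderiv hf) (hderiv hg) h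

theorem IsIntegralCurve.eq_of_continuous (hB : Continuous B) {f g : ℝ → E} {t₀ : ℝ}
    (hf : IsIntegralCurve f (fun t => B t)) (hg : IsIntegralCurve g (fun t => B t))
    (h : f t₀ = g t₀) : f = g := by
  funext t
  have hR : |t - t₀| < |t - t₀| + 1 := lt_add_one _
  refine IsIntegralCurveOn.eqOn_Ioo hB (hf.isIntegralCurveOn _) (hg.isIntegralCurveOn _)
    (p := t₀ - (|t - t₀| + 1)) (q := t₀ + (|t - t₀| + 1)) ?_ h ?_
  · constructor <;> linarith [abs_nonneg (t - t₀)]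
  · constructor <;> linarith [abs_lt.1 hR]

theorem exists_isIntegralCurve [CompleteSpace E] (hB : Continuous B) (t₀ : ℝ) (x₀ : E) :
    ∃ γ, γ t₀ = x₀ ∧ IsIntegralCurve γ (fun t => B t) := by
  choose γ hγ₀ hγ using fun n : ℕ => exists_isIntegralCurveOn_Icc hB
    (p := t₀ - (n + 1)) (q := t₀ + (n + 1)) (t₀ := t₀) ⟨by linarith, by linarith⟩ x₀
  have hmem : ∀ {s : ℝ} {n : ℕ}, |s - t₀| < n + 1 → s ∈ Ioo (t₀ - (n + 1)) (t₀ + (n + 1)) :=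
    fun hs => ⟨by linarith [abs_lt.1 hs], by linarith [abs_lt.1 hs]⟩
  have agree : ∀ n k : ℕ, n ≤ k → ∀ s, |s - t₀| < n + 1 → γ n s = γ k s := by
    intro n k hnk s hs
    have hsub : Ioo (t₀ - (n + 1)) (t₀ + (n + 1)) ⊆ Icc (t₀ - (k + 1)) (t₀ + (k + 1)) :=
      Ioo_subset_Icc_self.trans (Icc_subset_Icc (by gcongr) (by gcongr))
    exact IsIntegralCurveOn.eqOn_Ioo hB ((hγ n).mono Ioo_subset_Icc_self) ((hγ k).mono hsub)
      (hmem (n := n) (by rw [sub_self, abs_zero]; positivity)) (by rw [hγ₀, hγ₀]) (hmem hs)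
  have hceil : ∀ s, |s - t₀| < ⌈|s - t₀|⌉₊ + 1 := fun s => (Nat.le_ceil _).trans_lt (lt_add_one _)
  refine ⟨fun t => γ ⌈|t - t₀|⌉₊ t, by simpa using hγ₀ 0, fun t => ?_⟩
  have hnhds := isOpen_Ioo.mem_nhds (hmem (hceil t))
  refine ((hγ _ t (Ioo_subset_Icc_self (hmem (hceil t)))).hasDerivAt
    (Filter.mem_of_superset hnhds Ioo_subset_Icc_self)).congr_of_eventuallyEq ?_
  filter_upwards [hnhds] with s hs
  have hs' : |s - t₀| < ⌈|t - t₀|⌉₊ + 1 := abs_lt.2 ⟨by linarith [hs.1], by linarith [hs.2]⟩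
  rcases le_total ⌈|s - t₀|⌉₊ ⌈|t - t₀|⌉₊ with h | h
  · exact agree _ _ h s (hceil s)
  · exact (agree _ _ h s hs').symm

end LinearODE

section Companion

variable {m p : ℕ}

noncomputable def companion (A : Fin (p + 1) → ℝ → Matrix (Fin m) (Fin m) ℂ) (t : ℝ) :
    (Fin (p + 1) → Fin m → ℂ) →L[ℝ] (Fin (p + 1) → Fin m → ℂ) :=
  LinearMap.toContinuousLinearMap
    { toFun := fun Y => Fin.snoc (α := fun _ => Fin m → ℂ) (Fin.tail Y) (-∑ i, A i t *ᵥ Y i)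
      map_add' := fun Y Z => by
        ext j : 1
        refine Fin.lastCases ?_ (fun j => ?_) j <;>
          simp [Fin.tail, Matrix.mulVec_add, Finset.sum_add_distrib, add_comm]
      map_smul' := fun c Y => by
        ext j : 1
        refine Fin.lastCases ?_ (fun j => ?_) j <;>
          simp [Fin.tail, Matrix.mulVec_smul, Finset.smul_sum] }

variable {A : Fin (p + 1) → ℝ → Matrix (Fin m) (Fin m) ℂ}

@[simp]
theorem companion_apply_castSucc (t : ℝ) (Y : Fin (p + 1) → Fin m → ℂ) (j : Fin p) :
    companion A t Y j.castSucc = Y j.succ := by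
  simp [companion, Fin.tail]

@[simp]
theorem companion_apply_last (t : ℝ) (Y : Fin (p + 1) → Fin m → ℂ) :
    companion A t Y (Fin.last p) = -∑ i, A i t *ᵥ Y i := by
  simp [companion]

theorem continuous_companion (hA : ∀ i, Continuous (A i)) : Continuous (companion A) := by
  refine continuous_clm_apply.2 fun Y => continuous_pi fun j => ?_
  refine Fin.lastCases ?_ (fun j => ?_) j
  · simp only [companion_apply_last]
    exact (continuous_finsetSum _ fun i _ => (hA i).matrix_mulVec continuous_const).neg
  · simpa using continuous_const

end Companion

section Solutions

variable {m r : ℕ}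

theorem iteratedDeriv_add_of_contDiff {𝕜 F : Type*} [NontriviallyNormedField 𝕜]
    [NormedAddCommGroup F] [NormedSpace 𝕜 F] {f g : 𝕜 → F} {n k : ℕ}
    (hf : ContDiff 𝕜 n f) (hg : ContDiff 𝕜 n g) (hk : k ≤ n) :
    iteratedDeriv k (f + g) = iteratedDeriv k f + iteratedDeriv k g :=
  funext fun _ => iteratedDeriv_add (hf.contDiffAt.of_le (mod_cast hk))
    (hg.contDiffAt.of_le (mod_cast hk))

noncomputable def homogeneousSolutions (A : Fin r → ℝ → Matrix (Fin m) (Fin m) ℂ) :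
    Submodule ℂ (ℝ → Fin m → ℂ) where
  carrier := {y | ContDiff ℝ r y ∧
    ∀ t, iteratedDeriv r y t + ∑ j : Fin r, (A j t).mulVec (iteratedDeriv (j : ℕ) y t) = 0}
  add_mem' {y z} hy hz := by
    refine ⟨hy.1.add hz.1, fun t => ?_⟩
    have hadd : ∀ j : Fin r, iteratedDeriv j (y + z) = iteratedDeriv j y + iteratedDeriv j z :=
      fun j => iteratedDeriv_add_of_contDiff hy.1 hz.1 j.is_lt.le
    simp only [iteratedDeriv_add_of_contDiff hy.1 hz.1 le_rfl, hadd, Pi.add_apply, mulVec_add,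
      Finset.sum_add_distrib]
    rw [add_add_add_comm, hy.2 t, hz.2 t, add_zero]
  zero_mem' := ⟨contDiff_const, fun t => by simp⟩
  smul_mem' c _ hy := by
    refine ⟨hy.1.const_smul c, fun t => ?_⟩
    simp only [iteratedDeriv_const_smul_field, mulVec_smul, ← Finset.smul_sum, ← smul_add,
      hy.2 t, smul_zero]

noncomputable def cauchyMap (A : Fin r → ℝ → Matrix (Fin m) (Fin m) ℂ) (a : ℝ) :
    homogeneousSolutions A →ₗ[ℂ] (Fin r → Fin m → ℂ) where
  toFun y j := iteratedDeriv j (y : ℝ → Fin m → ℂ) a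
  map_add' y z := funext fun j => congrFun (iteratedDeriv_add_of_contDiff y.2.1 z.2.1 j.is_lt.le) a
  map_smul' c _ := funext fun _ => iteratedDeriv_const_smul_field c _

end Solutions

section Correspondence

variable {m p : ℕ} {A : Fin (p + 1) → ℝ → Matrix (Fin m) (Fin m) ℂ}

theorem isIntegralCurve_companion_of_mem_homogeneousSolutions {y : ℝ → Fin m → ℂ}
    (hy : y ∈ homogeneousSolutions A) :
    IsIntegralCurve (fun t (j : Fin (p + 1)) => iteratedDeriv j y t) (fun t => companion A t) := by
  intro t
  have hderiv : ∀ j : Fin (p + 1),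
      HasDerivAt (iteratedDeriv j y) (iteratedDeriv (j + 1) y t) t := fun j => by
    rw [iteratedDeriv_succ]
    exact ((hy.1.differentiable_iteratedDeriv j (mod_cast j.is_lt)) t).hasDerivAt
  refine hasDerivAt_pi.2 fun j => Fin.lastCases ?_ (fun j => ?_) j <;> dsimp only
  · rw [companion_apply_last, ← eq_neg_of_add_eq_zero_left (hy.2 t)]
    exact hderiv (Fin.last p)
  · rw [companion_apply_castSucc]
    exact hderiv j.castSucc

theorem iteratedDeriv_eq_of_isIntegralCurve_companion {Y : ℝ → Fin (p + 1) → Fin m → ℂ}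
    (hY : IsIntegralCurve Y (fun t => companion A t)) (j : Fin (p + 1)) :
    iteratedDeriv j (fun t => Y t 0) = fun t => Y t j := by
  induction j using Fin.induction with
  | zero => simp
  | succ j ih =>
    rw [Fin.val_succ, iteratedDeriv_succ, ← Fin.val_castSucc, ih]
    exact funext fun t =>
      (hasDerivAt_pi.1 (hY t) j.castSucc).deriv.trans (companion_apply_castSucc t (Y t) j)

theorem mem_homogeneousSolutions_of_isIntegralCurve_companion (hA : ∀ i, Continuous (A i))
    {Y : ℝ → Fin (p + 1) → Fin m → ℂ} (hY : IsIntegralCurve Y (fun t => companion A t)) :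
    (fun t => Y t 0) ∈ homogeneousSolutions A := by
  have hlast : iteratedDeriv (p + 1) (fun t => Y t 0) = fun t => -∑ i, A i t *ᵥ Y t i := by
    have hp := iteratedDeriv_eq_of_isIntegralCurve_companion hY (Fin.last p)
    rw [Fin.val_last] at hp
    rw [iteratedDeriv_succ, hp]
    exact funext fun t => (hasDerivAt_pi.1 (hY t) _).deriv.trans (companion_apply_last t (Y t))
  refine ⟨contDiff_iff_iteratedDeriv.2 ⟨fun k hk => ?_, fun k hk => ?_⟩, fun t => ?_⟩
  · rcases (show k ≤ p + 1 by exact_mod_cast hk).lt_or_eq with hk | rfl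
    · rw [show k = (⟨k, hk⟩ : Fin (p + 1)) from rfl,
        iteratedDeriv_eq_of_isIntegralCurve_companion hY]
      exact (continuous_apply _).comp hY.continuous
    · rw [hlast]
      exact (continuous_finsetSum _ fun i _ =>
        (hA i).matrix_mulVec ((continuous_apply i).comp hY.continuous)).neg
  · rw [show k = (⟨k, by exact_mod_cast hk⟩ : Fin (p + 1)) from rfl,
      iteratedDeriv_eq_of_isIntegralCurve_companion hY]
    exact fun t => (hasDerivAt_pi.1 (hY t) _).differentiableAt
  · simp [hlast, iteratedDeriv_eq_of_isIntegralCurve_companion hY]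

theorem cauchyMap_bijective (hA : ∀ i, Continuous (A i)) (a : ℝ) :
    Function.Bijective (cauchyMap A a) := by
  constructor
  · intro y z h
    have hYZ := IsIntegralCurve.eq_of_continuous (continuous_companion hA)
      (isIntegralCurve_companion_of_mem_homogeneousSolutions y.2)
      (isIntegralCurve_companion_of_mem_homogeneousSolutions z.2) h
    exact Subtype.ext (funext fun t => by simpa using congrFun (congrFun hYZ t) 0)
  · intro w
    obtain ⟨Y, hY₀, hY⟩ := exists_isIntegralCurve (continuous_companion hA) a w
    refine ⟨⟨_, mem_homogeneousSolutions_of_isIntegralCurve_companion hA hY⟩, funext fun j => ?_⟩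
    change iteratedDeriv j (fun t => Y t 0) a = w j
    rw [iteratedDeriv_eq_of_isIntegralCurve_companion hY]
    exact congrFun hY₀ j

end Correspondence

theorem homogeneous_solution_space_isomorphic_to_initial_data_general
    (m r : ℕ) (hr : 0 < r) (a : ℝ)
    (A : Fin r → ℝ → Matrix (Fin m) (Fin m) ℂ) (hA : ∀ j, Continuous (A j)) :
    ∃ S : Submodule ℂ (ℝ → Fin m → ℂ),
      (S : Set (ℝ → Fin m → ℂ)) =
        {y | ContDiff ℝ r y ∧
          ∀ t, iteratedDeriv r y t +
            ∑ j : Fin r, (A j t).mulVec (iteratedDeriv (j : ℕ) y t) = 0} ∧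
      Function.Bijective
        (fun y : S => fun j : Fin r => iteratedDeriv (j : ℕ) (y : ℝ → Fin m → ℂ) a) ∧
      Module.finrank ℂ S = r * m := by
  obtain ⟨p, rfl⟩ := Nat.exists_eq_add_one_of_ne_zero hr.ne'
  have hbij := cauchyMap_bijective hA a
  refine ⟨homogeneousSolutions A, rfl, hbij, ?_⟩
  rw [(LinearEquiv.ofBijective _ hbij).finrank_eq]
  simp [Module.finrank_pi_fintype]

/-- The set `S` of solutions of the homogeneous system
`y⁽ʳ⁾(t) + ∑_{j=1}^{r} A_{r-j}(t) y⁽ʳ⁻ʲ⁾(t) = 0` (with continuous coefficients)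
is a ℂ-linear subspace of the functions `ℝ → ℂ^m`, the Cauchy map
`y ↦ (y(a), y'(a), …, y⁽ʳ⁻¹⁾(a))` is a bijection from `S` onto `ℂ^{rm}`,
and in particular `S` has dimension `r * m`. -/
theorem homogeneous_solution_space_isomorphic_to_initial_data
    (m r : ℕ) (hm : 0 < m) (hr : 0 < r) (a : ℝ)
    (A : Fin r → ℝ → Matrix (Fin m) (Fin m) ℂ) (hA : ∀ j, Continuous (A j)) :
    ∃ S : Submodule ℂ (ℝ → Fin m → ℂ),
      (S : Set (ℝ → Fin m → ℂ)) =
        {y | ContDiff ℝ r y ∧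
          ∀ t, iteratedDeriv r y t +
            ∑ j : Fin r, (A j t).mulVec (iteratedDeriv (j : ℕ) y t) = 0} ∧
      Function.Bijective
        (fun y : S => fun j : Fin r => iteratedDeriv (j : ℕ) (y : ℝ → Fin m → ℂ) a) ∧
      Module.finrank ℂ S = r * m :=
  homogeneous_solution_space_isomorphic_to_initial_data_general m r hr a A hA
end

section
/- Fix integers m, r, l ≥ 1, a point a ∈ ℝ, and continuous matrix-valued functions A₀, …, A_{r−1} : ℝ → ℂ^{m×m}. For i ∈ {1,…,r} let Y_i : ℝ → ℂ^{m×m} be r-times continuously differentiable matrix-valued functions satisfying Y_i^{(r)}(t) + Σ_{j=1}^{r} A_{r−j}(t) Y_i^{(r−j)}(t) = 0 for all t ∈ ℝ and Y_i^{(j−1)}(a) = δ_{ij} I_m for j ∈ {1,…,r}. Let B be a ℂ-linear map from the space of all functions ℝ → ℂ^m to ℂ^l, and let M := ([BY_1], …, [BY_r]) ∈ ℂ^{l×rm} be the characteristic matrix. Then the map y ↦ (y(a), y'(a), …, y^{(r−1)}(a)) is a ℂ-linear bijection from the space { y : ℝ → ℂ^m : y is r-times continuously differentiable, y^{(r)}(t)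 + Σ_{j=1}^{r} A_{r−j}(t) y^{(r−j)}(t) = 0 for all t ∈ ℝ, and By = 0 } onto ker M ⊆ ℂ^{rm}; in particular the dimension of this solution space equals dim ker M. -/
/-!
The jet `(y, y', …, y⁽ʳ⁻¹⁾)` of a solution of `y⁽ʳ⁾ + ∑ Aⱼ y⁽ʲ⁾ = 0` solves a first-order
linear system with continuous coefficients, so by Grönwall's uniqueness theorem a solution is
determined by its jet at `a`. Hence every solution is `∑ Yᵢ cᵢ` with `c` its jet at `a`, and
`B (∑ Yᵢ cᵢ) = M c` by linearity of `B`: the map `c ↦ ∑ Yᵢ cᵢ` inverts the Cauchy map between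
the solutions with `B y = 0` and `ker M`.
-/

attribute [local instance] Matrix.normedAddCommGroup Matrix.normedSpace

open Set Matrix

theorem ContinuousLinearMap.iteratedDeriv_comp_left {F G : Type*} [NormedAddCommGroup F]
    [NormedSpace ℝ F] [NormedAddCommGroup G] [NormedSpace ℝ G] (g : F →L[ℝ] G) {f : ℝ → F}
    {n k : ℕ} (hf : ContDiff ℝ n f) (hk : k ≤ n) (t : ℝ) :
    iteratedDeriv k (fun s => g (f s)) t = g (iteratedDeriv k f t) := by
  simp only [iteratedDeriv_eq_iteratedFDeriv]
  rw [show (fun s => g (f s)) = g ∘ f from rfl,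
    g.iteratedFDeriv_comp_left hf.contDiffAt (by exact_mod_cast hk)]
  rfl

theorem ODE_solution_unique_univ_of_continuous_linear {𝕜 E : Type*} [NontriviallyNormedField 𝕜]
    [NormedAddCommGroup E] [NormedSpace 𝕜 E] [NormedSpace ℝ E]
    {L : ℝ → E →L[𝕜] E} (hL : Continuous L) {f g : ℝ → E}
    (hf : ∀ t, HasDerivAt f (L t (f t)) t) (hg : ∀ t, HasDerivAt g (L t (g t)) t)
    {t₀ : ℝ} (heq : f t₀ = g t₀) : f = g := by
  funext t
  obtain ⟨c, d, ht, ht₀⟩ : ∃ c d, t ∈ Ioo c d ∧ t₀ ∈ Ioo c d :=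
    ⟨min t t₀ - 1, max t t₀ + 1, by constructor <;> constructor <;> grind⟩
  obtain ⟨K, hK⟩ := isCompact_Icc.exists_bound_of_continuousOn (hL.continuousOn (s := Icc c d))
  have hlip : ∀ s ∈ Ioo c d, LipschitzOnWith K.toNNReal (L s) univ := fun s hs =>
    (ContinuousLinearMap.lipschitzWith_of_opNorm_le
      ((hK s (Ioo_subset_Icc_self hs)).trans (Real.le_coe_toNNReal K))).lipschitzOnWith
  exact ODE_solution_unique_of_mem_Ioo hlip ht₀ (fun s _ => ⟨hf s, mem_univ _⟩)
    (fun s _ => ⟨hg s, mem_univ _⟩) heq ht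

section MatrixCalculus

variable {𝕜 : Type*} [RCLike 𝕜] {n : Type*} [Fintype n]

theorem Matrix.ODE_solution_unique_univ_of_continuous [DecidableEq n] {M : ℝ → Matrix n n 𝕜}
    (hM : Continuous M) {f g : ℝ → n → 𝕜} (hf : ∀ t, HasDerivAt f (M t *ᵥ f t) t)
    (hg : ∀ t, HasDerivAt g (M t *ᵥ g t) t) {t₀ : ℝ} (heq : f t₀ = g t₀) : f = g := by
  have hcont : Continuous fun M : Matrix n n 𝕜 => LinearMap.toContinuousLinearMap (toLin' M) :=
    ((LinearMap.toContinuousLinearMap : ((n → 𝕜) →ₗ[𝕜] (n → 𝕜)) ≃ₗ[𝕜] _).toLinearMap ∘ₗ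
      (toLin' : Matrix n n 𝕜 ≃ₗ[𝕜] _).toLinearMap).continuous_of_finiteDimensional
  exact ODE_solution_unique_univ_of_continuous_linear (hcont.comp hM) hf hg heq

noncomputable def Matrix.mulVecCLM (v : n → 𝕜) : Matrix n n 𝕜 →L[ℝ] (n → 𝕜) :=
  LinearMap.toContinuousLinearMap ((mulVecBilin ℝ ℝ).flip v)

theorem ContDiff.mulVec_const {Y : ℝ → Matrix n n 𝕜} {N : WithTop ℕ∞} (hY : ContDiff ℝ N Y)
    (v : n → 𝕜) : ContDiff ℝ N (fun s => Y s *ᵥ v) :=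
  (mulVecCLM v).contDiff.comp hY

theorem iteratedDeriv_mulVec_const {Y : ℝ → Matrix n n 𝕜} {N k : ℕ} (hY : ContDiff ℝ N Y)
    (hk : k ≤ N) (v : n → 𝕜) (t : ℝ) :
    iteratedDeriv k (fun s => Y s *ᵥ v) t = iteratedDeriv k Y t *ᵥ v :=
  (mulVecCLM v).iteratedDeriv_comp_left hY hk t

end MatrixCalculus

section LinearODE

variable {𝕜 : Type*} [RCLike 𝕜] {n : Type*} {r : ℕ}

/-- `jet r y` solves `x' = blockCompanion A x` when `y` solves `y⁽ʳ⁾ + ∑ Aⱼ y⁽ʲ⁾ = 0`. -/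
def blockCompanion [DecidableEq n] (A : Fin r → Matrix n n 𝕜) :
    Matrix (Fin r × n) (Fin r × n) 𝕜 :=
  of fun p q =>
    if h : (p.1 : ℕ) + 1 < r then (Pi.single (⟨p.1 + 1, h⟩, p.2) 1 : Fin r × n → 𝕜) q
    else -A q.1 p.2 q.2

theorem continuous_blockCompanion [DecidableEq n] {A : Fin r → ℝ → Matrix n n 𝕜}
    (hA : ∀ j, Continuous (A j)) :
    Continuous fun t => blockCompanion fun j => A j t := by
  refine continuous_pi fun p => continuous_pi fun q => ?_
  simp only [blockCompanion, of_apply]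
  split_ifs
  · exact continuous_const
  · exact ((hA q.1).matrix_elem p.2 q.2).neg

variable [Fintype n]

def IsLinearODESolution (A : Fin r → ℝ → Matrix n n 𝕜) (y : ℝ → n → 𝕜) : Prop :=
  ContDiff ℝ r y ∧ ∀ t, iteratedDeriv r y t + ∑ j : Fin r, A j t *ᵥ iteratedDeriv j y t = 0

noncomputable def jet (r : ℕ) (y : ℝ → n → 𝕜) (t : ℝ) : Fin r × n → 𝕜 :=
  fun p => iteratedDeriv p.1 y t p.2

noncomputable def fundamentalCombination (Y : Fin r → ℝ → Matrix n n 𝕜) :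
    (Fin r × n → 𝕜) →ₗ[𝕜] (ℝ → n → 𝕜) where
  toFun c t := ∑ i, Y i t *ᵥ fun q => c (i, q)
  map_add' c c' := by
    funext t
    simp only [Pi.add_apply, ← Finset.sum_add_distrib, ← mulVec_add]
    rfl
  map_smul' z c := by
    funext t
    simp only [Pi.smul_apply, RingHom.id_apply, Finset.smul_sum, ← mulVec_smul]
    rfl

theorem iteratedDeriv_fundamentalCombination {Y : Fin r → ℝ → Matrix n n 𝕜}
    (hY : ∀ i, ContDiff ℝ r (Y i)) {k : ℕ} (hk : k ≤ r) (c : Fin r × n → 𝕜) (t : ℝ) :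
    iteratedDeriv k (fundamentalCombination Y c) t =
      ∑ i, iteratedDeriv k (Y i) t *ᵥ fun q => c (i, q) := by
  rw [show fundamentalCombination Y c = fun t => ∑ i, Y i t *ᵥ fun q => c (i, q) from rfl,
    iteratedDeriv_fun_sum fun i _ =>
      ((hY i).mulVec_const _).contDiffAt.of_le (by exact_mod_cast hk)]
  exact Finset.sum_congr rfl fun i _ => iteratedDeriv_mulVec_const (hY i) hk _ t

theorem isLinearODESolution_fundamentalCombination {A Y : Fin r → ℝ → Matrix n n 𝕜}
    (hY : ∀ i, ContDiff ℝ r (Y i))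
    (hYode : ∀ i t, iteratedDeriv r (Y i) t + ∑ j : Fin r, A j t * iteratedDeriv j (Y i) t = 0)
    (c : Fin r × n → 𝕜) : IsLinearODESolution A (fundamentalCombination Y c) := by
  refine ⟨ContDiff.sum (s := Finset.univ) fun i _ => (hY i).mulVec_const _, fun t => ?_⟩
  have hder (j : Fin r) := iteratedDeriv_fundamentalCombination hY j.is_le' c t
  simp only [iteratedDeriv_fundamentalCombination hY le_rfl, hder]
  calc _ = ∑ i, (iteratedDeriv r (Y i) t + ∑ j : Fin r, A j t * iteratedDeriv j (Y i) t) *ᵥ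
        fun q => c (i, q) := by
        simp only [add_mulVec, sum_mulVec, mulVec_sum, mulVec_mulVec, Finset.sum_add_distrib]
        rw [Finset.sum_comm]
    _ = 0 := by simp [hYode]

theorem map_fundamentalCombination {ι : Type*} {Y : Fin r → ℝ → Matrix n n 𝕜}
    (B : (ℝ → n → 𝕜) →ₗ[𝕜] (ι → 𝕜)) {M : Matrix ι (Fin r × n) 𝕜}
    (hM : ∀ q i j, M q (i, j) = B (fun t p => Y i t p j) q)
    (c : Fin r × n → 𝕜) : B (fundamentalCombination Y c) = M *ᵥ c := by
  have hcols : fundamentalCombination Y c = ∑ p : Fin r × n, c p • fun t q => Y p.1 t q p.2 := by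
    funext t q
    simp [fundamentalCombination, mulVec, dotProduct, Fintype.sum_prod_type, mul_comm]
  funext q
  simp [hcols, mulVec, dotProduct, hM, mul_comm]

variable [DecidableEq n]

theorem blockCompanion_mulVec_of_lt (A : Fin r → Matrix n n 𝕜) (x : Fin r × n → 𝕜)
    {p : Fin r × n} (h : (p.1 : ℕ) + 1 < r) :
    (blockCompanion A *ᵥ x) p = x (⟨p.1 + 1, h⟩, p.2) := by
  simp [blockCompanion, mulVec, h]

theorem blockCompanion_mulVec_of_not_lt (A : Fin r → Matrix n n 𝕜) (x : Fin r × n → 𝕜)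
    {p : Fin r × n} (h : ¬(p.1 : ℕ) + 1 < r) :
    (blockCompanion A *ᵥ x) p = -(∑ k, A k *ᵥ fun q => x (k, q)) p.2 := by
  simp [blockCompanion, mulVec, dotProduct, h, Fintype.sum_prod_type]

theorem IsLinearODESolution.hasDerivAt_jet {A : Fin r → ℝ → Matrix n n 𝕜} {y : ℝ → n → 𝕜}
    (hy : IsLinearODESolution A y) (t : ℝ) :
    HasDerivAt (jet r y) (blockCompanion (fun j => A j t) *ᵥ jet r y t) t := by
  rw [hasDerivAt_pi]
  rintro ⟨i, p⟩
  have hdiff : HasDerivAt (iteratedDeriv i y) (iteratedDeriv (i + 1) y t) t := by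
    rw [iteratedDeriv_succ]
    exact ((hy.1.differentiable_iteratedDeriv i (by exact_mod_cast i.isLt)) t).hasDerivAt
  refine (hasDerivAt_pi.1 hdiff p).congr_deriv ?_
  by_cases h : (i : ℕ) + 1 < r
  · rw [blockCompanion_mulVec_of_lt _ _ h]
    rfl
  · rw [blockCompanion_mulVec_of_not_lt _ _ h, show (i : ℕ) + 1 = r by omega,
      eq_neg_of_add_eq_zero_left (hy.2 t)]
    rfl

theorem IsLinearODESolution.jet_eq_of_jet_eq {A : Fin r → ℝ → Matrix n n 𝕜}
    (hA : ∀ j, Continuous (A j)) {y₁ y₂ : ℝ → n → 𝕜} (h₁ : IsLinearODESolution A y₁)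
    (h₂ : IsLinearODESolution A y₂) {a : ℝ} (ha : jet r y₁ a = jet r y₂ a) :
    jet r y₁ = jet r y₂ :=
  ODE_solution_unique_univ_of_continuous (continuous_blockCompanion hA) h₁.hasDerivAt_jet
    h₂.hasDerivAt_jet ha

theorem IsLinearODESolution.eq_of_jet_eq {A : Fin r → ℝ → Matrix n n 𝕜}
    (hA : ∀ j, Continuous (A j)) {y₁ y₂ : ℝ → n → 𝕜} (h₁ : IsLinearODESolution A y₁)
    (h₂ : IsLinearODESolution A y₂) {a : ℝ} (ha : jet r y₁ a = jet r y₂ a) : y₁ = y₂ := by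
  rcases Nat.eq_zero_or_pos r with rfl | hr
  · funext t
    simpa using (h₁.2 t).trans (h₂.2 t).symm
  · funext t q
    exact congrFun (congrFun (h₁.jet_eq_of_jet_eq hA h₂ ha) t) (⟨0, hr⟩, q)

theorem jet_fundamentalCombination {Y : Fin r → ℝ → Matrix n n 𝕜}
    (hY : ∀ i, ContDiff ℝ r (Y i)) {a : ℝ}
    (hYinit : ∀ i j : Fin r, iteratedDeriv j (Y i) a = if i = j then 1 else 0)
    (c : Fin r × n → 𝕜) : jet r (fundamentalCombination Y c) a = c := by
  funext ⟨k, q⟩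
  rw [jet, iteratedDeriv_fundamentalCombination hY k.is_le', Finset.sum_apply,
    Fintype.sum_eq_single k fun i hi => by simp [hYinit, hi]]
  simp [hYinit]

theorem fundamentalCombination_jet {A Y : Fin r → ℝ → Matrix n n 𝕜} (hA : ∀ j, Continuous (A j))
    (hY : ∀ i, ContDiff ℝ r (Y i))
    (hYode : ∀ i t, iteratedDeriv r (Y i) t + ∑ j : Fin r, A j t * iteratedDeriv j (Y i) t = 0)
    {a : ℝ} (hYinit : ∀ i j : Fin r, iteratedDeriv j (Y i) a = if i = j then 1 else 0)
    {y : ℝ → n → 𝕜} (hy : IsLinearODESolution A y) :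
    fundamentalCombination Y (jet r y a) = y :=
  (isLinearODESolution_fundamentalCombination hY hYode _).eq_of_jet_eq hA hy
    (jet_fundamentalCombination hY hYinit _)

end LinearODE

theorem kernel_of_problem_isomorphic_to_kernel_of_characteristic_matrix_general
    (m r l : ℕ) (a : ℝ)
    (A : Fin r → ℝ → Matrix (Fin m) (Fin m) ℂ) (hA : ∀ j, Continuous (A j))
    (Y : Fin r → ℝ → Matrix (Fin m) (Fin m) ℂ)
    (hYsmooth : ∀ i, ContDiff ℝ r (Y i))
    (hYode : ∀ i t, iteratedDeriv r (Y i) t +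
        ∑ j : Fin r, A j t * iteratedDeriv (j : ℕ) (Y i) t = 0)
    (hYinit : ∀ i j : Fin r,
        iteratedDeriv (j : ℕ) (Y i) a = if i = j then (1 : Matrix (Fin m) (Fin m) ℂ) else 0)
    (B : (ℝ → Fin m → ℂ) →ₗ[ℂ] (Fin l → ℂ))
    (M : Matrix (Fin l) (Fin r × Fin m) ℂ)
    (hM : ∀ (q : Fin l) (i : Fin r) (j : Fin m),
        M q (i, j) = B (fun t => fun p => Y i t p j) q) :
    Set.BijOn (fun (y : ℝ → Fin m → ℂ) (p : Fin r × Fin m) => iteratedDeriv (p.1 : ℕ) y a p.2)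
      {y : ℝ → Fin m → ℂ | ContDiff ℝ r y ∧
        (∀ t, iteratedDeriv r y t +
          ∑ j : Fin r, (A j t).mulVec (iteratedDeriv (j : ℕ) y t) = 0) ∧ B y = 0}
      (LinearMap.ker M.mulVecLin : Set (Fin r × Fin m → ℂ)) ∧
    ∃ S : Submodule ℂ (ℝ → Fin m → ℂ),
      (S : Set (ℝ → Fin m → ℂ)) =
        {y : ℝ → Fin m → ℂ | ContDiff ℝ r y ∧
          (∀ t, iteratedDeriv r y t +
            ∑ j : Fin r, (A j t).mulVec (iteratedDeriv (j : ℕ) y t) = 0) ∧ B y = 0} ∧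
      Module.finrank ℂ S = Module.finrank ℂ (LinearMap.ker M.mulVecLin) := by
  set Φ := fundamentalCombination Y
  have hjet : Function.LeftInverse (jet r · a) Φ := jet_fundamentalCombination hYsmooth hYinit
  have hΦ : ∀ c, B (Φ c) = M *ᵥ c := map_fundamentalCombination B hM
  have hinv : InvOn Φ (jet r · a) {y | IsLinearODESolution A y ∧ B y = 0}
      (LinearMap.ker M.mulVecLin) :=
    ⟨fun y hy => fundamentalCombination_jet hA hYsmooth hYode hYinit hy.1, fun c _ => hjet c⟩
  have hjet_maps : MapsTo (jet r · a) {y | IsLinearODESolution A y ∧ B y = 0}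
      (LinearMap.ker M.mulVecLin) := fun y hy => by
    simp [← hΦ, hinv.1 hy, hy.2]
  have hΦ_maps : MapsTo Φ (LinearMap.ker M.mulVecLin) {y | IsLinearODESolution A y ∧ B y = 0} :=
    fun c hc =>
      ⟨isLinearODESolution_fundamentalCombination hYsmooth hYode c, by simpa [hΦ] using hc⟩
  refine ⟨?_, Submodule.map Φ (LinearMap.ker M.mulVecLin), ?_, ?_⟩
  · have hbij := hinv.bijOn hjet_maps hΦ_maps
    simp only [IsLinearODESolution, and_assoc] at hbij
    exact hbij
  · simpa only [IsLinearODESolution, and_assoc, Submodule.map_coe] using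
      (hinv.symm.bijOn hΦ_maps hjet_maps).image_eq
  · exact (LinearEquiv.finrank_eq (Submodule.equivMapOfInjective Φ hjet.injective _)).symm

/-- Let `Y₁, …, Y_r` be the fundamental matrix solutions of the homogeneous system,
`B` a ℂ-linear map from functions `ℝ → ℂ^m` to `ℂ^l`, and
`M = ([BY₁], …, [BY_r])` the characteristic matrix. Then the Cauchy map
`y ↦ (y(a), …, y⁽ʳ⁻¹⁾(a))` is a ℂ-linear bijection from the space of solutions of
the homogeneous boundary-value problem onto `ker M`; in particular the dimension
of the solution space equals `dim ker M`. -/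
theorem kernel_of_problem_isomorphic_to_kernel_of_characteristic_matrix
    (m r l : ℕ) (hm : 0 < m) (hr : 0 < r) (hl : 0 < l) (a : ℝ)
    (A : Fin r → ℝ → Matrix (Fin m) (Fin m) ℂ) (hA : ∀ j, Continuous (A j))
    (Y : Fin r → ℝ → Matrix (Fin m) (Fin m) ℂ)
    (hYsmooth : ∀ i, ContDiff ℝ r (Y i))
    (hYode : ∀ i t, iteratedDeriv r (Y i) t +
        ∑ j : Fin r, A j t * iteratedDeriv (j : ℕ) (Y i) t = 0)
    (hYinit : ∀ i j : Fin r,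
        iteratedDeriv (j : ℕ) (Y i) a = if i = j then (1 : Matrix (Fin m) (Fin m) ℂ) else 0)
    (B : (ℝ → Fin m → ℂ) →ₗ[ℂ] (Fin l → ℂ))
    (M : Matrix (Fin l) (Fin r × Fin m) ℂ)
    (hM : ∀ (q : Fin l) (i : Fin r) (j : Fin m),
        M q (i, j) = B (fun t => fun p => Y i t p j) q) :
    Set.BijOn (fun (y : ℝ → Fin m → ℂ) (p : Fin r × Fin m) => iteratedDeriv (p.1 : ℕ) y a p.2)
      {y : ℝ → Fin m → ℂ | ContDiff ℝ r y ∧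
        (∀ t, iteratedDeriv r y t +
          ∑ j : Fin r, (A j t).mulVec (iteratedDeriv (j : ℕ) y t) = 0) ∧ B y = 0}
      (LinearMap.ker M.mulVecLin : Set (Fin r × Fin m → ℂ)) ∧
    ∃ S : Submodule ℂ (ℝ → Fin m → ℂ),
      (S : Set (ℝ → Fin m → ℂ)) =
        {y : ℝ → Fin m → ℂ | ContDiff ℝ r y ∧
          (∀ t, iteratedDeriv r y t +
            ∑ j : Fin r, (A j t).mulVec (iteratedDeriv (j : ℕ) y t) = 0) ∧ B y = 0} ∧
      Module.finrank ℂ S = Module.finrank ℂ (LinearMap.ker M.mulVecLin) :=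
  kernel_of_problem_isomorphic_to_kernel_of_characteristic_matrix_general m r l a A hA Y hYsmooth
    hYode hYinit B M hM
end

section
/- Fix real numbers a < b and integers m, r, l ≥ 1. For y : ℝ → ℂ^m that is (r−1)-times continuously differentiable, let J(y) ∈ C([a,b], ℂ^{rm}) denote its jet, J(y)(t) = (y(t), y'(t), …, y^{(r−1)}(t)). For a continuous linear operator B : C([a,b], ℂ^{rm}) → ℂ^l and fundamental matrix solutions Y₁, …, Y_r, let M ∈ ℂ^{l×rm} be the characteristic matrix whose column indexed by (i,j) (i ∈ {1,…,r}, j ∈ {1,…,m}) is B(J(y_{ij})), where y_{ij} is the j-th column of Y_i. For k ∈ ℕ let A₀(·,k), …, A_{r−1}(·,k) and A₀, …, A_{r−1} : ℝ → ℂ^{m×m} be continuous with sup_{t∈[a,b]} ‖A_j(t,k) − A_j(t)‖ → 0 for each j, let Y_i(·,k) and Y_i be the corresponding fundamental matrix solutions with initial data Y^{(j−1)}(a) = δ_{ij} I_m, and let B_k, B : C([a,b], ℂ^{rm}) → ℂ^l be continuous linear operators with B_k u → B u for every u ∈ C([a,b], ℂ^{rm}). Then the characteristic matrices M_k (built from Y_i(·,k)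 and B_k) converge entrywise to the characteristic matrix M (built from Y_i and B) as k → ∞. -/
/-!
The jet `(y, y', …, y⁽ʳ⁻¹⁾)` of a solution of a linear equation of order `r` solves a
first-order system. For the difference `Yᵢ(·,k) - Yᵢ` this system has coefficients bounded
uniformly in `k` and a forcing term of size `sup ‖A_j(·,k) - A_j‖ · sup ‖Yᵢ⁽ʲ⁾‖`, and the jet
vanishes at `a`; Grönwall's inequality therefore makes the jets of `Yᵢ(·,k)` converge to that of
`Yᵢ` uniformly on `[a,b]`. By Banach–Steinhaus the strongly convergent `B_k` are uniformly
bounded, so `B_k u_k → B u` whenever `u_k → u`.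
-/


attribute [local instance] Matrix.normedAddCommGroup Matrix.normedSpace

open scoped Classical in
/-- The jet `J(y) = (y, y', …, y⁽ʳ⁻¹⁾)` of a function `y : ℝ → ℂ^m`, as a continuous
map on `[a,b]` with values in `ℂ^{rm}` (junk value `0` if the jet fails to be
continuous, which does not happen for `(r-1)`-times continuously differentiable `y`). -/
noncomputable def jetCM (a b : ℝ) {m : ℕ} (r : ℕ) (y : ℝ → Fin m → ℂ) :
    C(Set.Icc a b, Fin r × Fin m → ℂ) :=
  if h : Continuous fun t : Set.Icc a b =>
      fun p : Fin r × Fin m => iteratedDeriv (p.1 : ℕ) y t.1 p.2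
  then ⟨_, h⟩ else 0

/-- The characteristic matrix `M(L,B) = ([BY₁], …, [BY_r]) ∈ ℂ^{l × rm}`: its column
indexed by `(i,j)` is `B` applied to the jet of the `j`-th column of `Y_i`. -/
noncomputable def charMatrix {m r l : ℕ} (a b : ℝ)
    (B : C(Set.Icc a b, Fin r × Fin m → ℂ) →L[ℂ] (Fin l → ℂ))
    (Y : Fin r → ℝ → Matrix (Fin m) (Fin m) ℂ) :
    Matrix (Fin l) (Fin r × Fin m) ℂ :=
  Matrix.of fun (q : Fin l) (p : Fin r × Fin m) =>
    B (jetCM a b r (fun t v => Y p.1 t v p.2)) q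

open Filter Topology Set

section Gronwall

variable {F : Type*} [NormedAddCommGroup F] [NormedSpace ℝ F]

theorem exists_pos_gronwallBound_lt (K x : ℝ) {ε : ℝ} (hε : 0 < ε) :
    ∃ η > 0, gronwallBound 0 K η x < ε := by
  have hlim : Tendsto (fun η => gronwallBound 0 K η x) (𝓝[>] 0) (𝓝 0) := by
    simpa only [gronwallBound_ε0_δ0] using
      ((gronwallBound_continuous_ε 0 K x).tendsto 0).mono_left nhdsWithin_le_nhds
  exact ((hlim.eventually (gt_mem_nhds hε)).and self_mem_nhdsWithin).exists.imp
    fun η h => ⟨h.2, h.1⟩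

theorem tendstoUniformlyOn_zero_of_norm_deriv_le {g g' : ℕ → ℝ → F} {a b K : ℝ}
    (hg : ∀ k, ContinuousOn (g k) (Icc a b))
    (hg' : ∀ k, ∀ t ∈ Ico a b, HasDerivWithinAt (g k) (g' k t) (Ici t) t)
    (ha : ∀ k, g k a = 0)
    (hbound : ∀ ε > 0, ∀ᶠ k in atTop, ∀ t ∈ Ico a b, ‖g' k t‖ ≤ K * ‖g k t‖ + ε) :
    TendstoUniformlyOn g 0 atTop (Icc a b) := by
  rw [Metric.tendstoUniformlyOn_iff]
  intro ε hε
  set K₀ := max K 0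
  obtain ⟨η, hη, hηε⟩ := exists_pos_gronwallBound_lt K₀ (b - a) hε
  filter_upwards [hbound η hη] with k hk t ht
  have hgt : ‖g k t‖ ≤ gronwallBound 0 K₀ η (t - a) :=
    norm_le_gronwallBound_of_norm_deriv_right_le (hg k) (hg' k) (by simp [ha k])
      (fun s hs => (hk s hs).trans (by gcongr; exact le_max_left K 0)) t ht
  calc dist ((0 : ℝ → F) t) (g k t) = ‖g k t‖ := by simp
    _ ≤ gronwallBound 0 K₀ η (b - a) :=
        hgt.trans (gronwallBound_mono le_rfl hη.le (le_max_right K 0) (by linarith [ht.2]))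
    _ < ε := hηε

end Gronwall

theorem ContinuousLinearMap.iteratedDeriv_comp_left_s12 {𝕜 F G : Type*} [NontriviallyNormedField 𝕜]
    [NormedAddCommGroup F] [NormedSpace 𝕜 F] [NormedAddCommGroup G] [NormedSpace 𝕜 G]
    (g : F →L[𝕜] G) {f : 𝕜 → F} {n : WithTop ℕ∞} {x : 𝕜} (hf : ContDiffAt 𝕜 n f x) {i : ℕ}
    (hi : i ≤ n) : iteratedDeriv i (g ∘ f) x = g (iteratedDeriv i f x) := by
  simp [iteratedDeriv_eq_iteratedFDeriv, g.iteratedFDeriv_comp_left hf hi]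

theorem ContinuousLinearMap.norm_sum_apply_apply_le {𝕜 ι E F G : Type*} [NontriviallyNormedField 𝕜]
    [Fintype ι] [NormedAddCommGroup E] [NormedSpace 𝕜 E] [NormedAddCommGroup F]
    [NormedSpace 𝕜 F] [NormedAddCommGroup G] [NormedSpace 𝕜 G]
    (L : E →L[𝕜] F →L[𝕜] G) (a : ι → E) (x : ι → F) :
    ‖∑ j, L (a j) (x j)‖ ≤ Fintype.card ι * ‖L‖ * ‖a‖ * ‖x‖ := by
  calc ‖∑ j, L (a j) (x j)‖ ≤ ∑ _j : ι, ‖L‖ * ‖a‖ * ‖x‖ :=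
        norm_sum_le_of_le _ fun j _ => (L.le_opNorm₂ _ _).trans <| by
          gcongr
          exacts [norm_le_pi_norm a j, norm_le_pi_norm x j]
    _ = Fintype.card ι * ‖L‖ * ‖a‖ * ‖x‖ := by
        rw [Finset.sum_const, Finset.card_univ, nsmul_eq_mul]; ring

section DerivJet

variable {F : Type*} [NormedAddCommGroup F] [NormedSpace ℝ F] {r : ℕ}

noncomputable def derivJet (r : ℕ) (f : ℝ → F) (t : ℝ) : Fin r → F := fun j => iteratedDeriv j f t

theorem hasDerivAt_derivJet {f : ℝ → F} (hf : ContDiff ℝ r f) (t : ℝ) :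
    HasDerivAt (derivJet r f) (fun j : Fin r => iteratedDeriv (j + 1) f t) t := by
  refine hasDerivAt_pi.2 fun j => ?_
  rw [iteratedDeriv_succ]
  exact ((hf.differentiable_iteratedDeriv j (by exact_mod_cast j.isLt)) t).hasDerivAt

theorem continuous_derivJet {f : ℝ → F} (hf : ContDiff ℝ r f) : Continuous (derivJet r f) :=
  continuous_iff_continuousAt.2 fun t => (hasDerivAt_derivJet hf t).continuousAt

theorem derivJet_sub {f g : ℝ → F} (hf : ContDiff ℝ r f) (hg : ContDiff ℝ r g) (t : ℝ) :
    derivJet r (f - g) t = derivJet r f t - derivJet r g t :=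
  funext fun j => iteratedDeriv_sub (hf.of_le (by exact_mod_cast j.isLt.le)).contDiffAt
    (hg.of_le (by exact_mod_cast j.isLt.le)).contDiffAt

theorem norm_iteratedDeriv_succ_le (f : ℝ → F) (t : ℝ) :
    ‖fun j : Fin r => iteratedDeriv (j + 1) f t‖ ≤ ‖derivJet r f t‖ + ‖iteratedDeriv r f t‖ := by
  refine pi_norm_le_iff_of_nonneg (by positivity) |>.2 fun j => ?_
  rcases Nat.lt_or_ge (j + 1) r with hlt | hge
  · exact (norm_le_pi_norm (derivJet r f t) ⟨j + 1, hlt⟩).trans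
      (le_add_of_nonneg_right (norm_nonneg _))
  · rw [le_antisymm j.isLt hge]
    exact le_add_of_nonneg_left (norm_nonneg _)

end DerivJet

section LinearODE

variable {E F : Type*} [NormedAddCommGroup E] [NormedSpace ℝ E] [NormedAddCommGroup F]
  [NormedSpace ℝ F] {r : ℕ}

theorem norm_deriv_derivJet_sub_le_of_linearODE (L : E →L[ℝ] F →L[ℝ] F) {f y : ℝ → F}
    (hf : ContDiff ℝ r f) (hy : ContDiff ℝ r y) {c a : Fin r → E} {t : ℝ}
    (hfode : iteratedDeriv r f t + ∑ j, L (c j) (iteratedDeriv j f t) = 0)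
    (hyode : iteratedDeriv r y t + ∑ j, L (a j) (iteratedDeriv j y t) = 0) :
    ‖fun j : Fin r => iteratedDeriv (j + 1) (f - y) t‖ ≤
      (1 + r * ‖L‖ * ‖c‖) * ‖derivJet r (f - y) t‖ + r * ‖L‖ * ‖c - a‖ * ‖derivJet r y t‖ := by
  have htop : iteratedDeriv r (f - y) t = -(∑ j, L (c j) (derivJet r (f - y) t j) +
      ∑ j, L ((c - a) j) (derivJet r y t j)) := by
    rw [iteratedDeriv_sub hf.contDiffAt hy.contDiffAt, derivJet_sub hf hy,
      eq_neg_of_add_eq_zero_left hfode, eq_neg_of_add_eq_zero_left hyode]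
    simp only [derivJet, Pi.sub_apply, map_sub, sub_apply, Finset.sum_sub_distrib]
    abel
  have h₁ := L.norm_sum_apply_apply_le c (derivJet r (f - y) t)
  have h₂ := L.norm_sum_apply_apply_le (c - a) (derivJet r y t)
  rw [Fintype.card_fin] at h₁ h₂
  have h₃ := norm_add_le (∑ j, L (c j) (derivJet r (f - y) t j))
    (∑ j, L ((c - a) j) (derivJet r y t j))
  have h₄ := norm_iteratedDeriv_succ_le (r := r) (f - y) t
  rw [htop, norm_neg] at h₄
  linarith

theorem exists_norm_deriv_derivJet_sub_le_of_linearODE (L : E →L[ℝ] F →L[ℝ] F) {a b : ℝ}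
    {A : Fin r → ℝ → E} {Aseq : ℕ → Fin r → ℝ → E}
    (hA : ∀ j, ContinuousOn (A j) (Icc a b))
    (hAconv : ∀ j, TendstoUniformlyOn (fun k => Aseq k j) (A j) atTop (Icc a b))
    {y : ℝ → F} {yseq : ℕ → ℝ → F} (hy : ContDiff ℝ r y) (hyseq : ∀ k, ContDiff ℝ r (yseq k))
    (hode : ∀ t ∈ Icc a b, iteratedDeriv r y t + ∑ j, L (A j t) (iteratedDeriv j y t) = 0)
    (hodeseq : ∀ k, ∀ t ∈ Icc a b,
      iteratedDeriv r (yseq k) t + ∑ j, L (Aseq k j t) (iteratedDeriv j (yseq k) t) = 0) :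
    ∃ K, ∀ ε > 0, ∀ᶠ k in atTop, ∀ t ∈ Icc a b,
      ‖fun j : Fin r => iteratedDeriv (j + 1) (yseq k - y) t‖ ≤
        K * ‖derivJet r (yseq k - y) t‖ + ε := by
  obtain ⟨CA, hCA⟩ : ∃ CA, ∀ t ∈ Icc a b, ‖fun j => A j t‖ ≤ CA :=
    isCompact_Icc.exists_bound_of_continuousOn (continuousOn_pi.2 hA)
  obtain ⟨CY, hCY_pos, hCY⟩ : ∃ CY > 0, ∀ t ∈ Icc a b, ‖derivJet r y t‖ ≤ CY :=
    (isCompact_Icc.image_of_continuousOn (continuous_derivJet hy).continuousOn).isBounded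
      |>.exists_pos_norm_le.imp fun _ h => ⟨h.1, forall_mem_image.1 h.2⟩
  have hclose : ∀ η > 0, ∀ᶠ k in atTop, ∀ t ∈ Icc a b,
      ‖(fun j => Aseq k j t) - (fun j => A j t)‖ ≤ η := by
    intro η hη
    filter_upwards [eventually_all.2 fun j => Metric.tendstoUniformlyOn_iff.1 (hAconv j) η hη]
      with k hk t ht
    refine (pi_norm_le_iff_of_nonneg hη.le).2 fun j => ?_
    simpa [dist_eq_norm'] using (hk j t ht).le
  refine ⟨1 + r * ‖L‖ * (CA + 1), fun ε hε => ?_⟩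
  filter_upwards [hclose 1 one_pos, hclose (ε / (r * ‖L‖ * CY + 1)) (by positivity)]
    with k hk₁ hkε t ht
  have hAseq : ‖fun j => Aseq k j t‖ ≤ CA + 1 := calc
    ‖fun j => Aseq k j t‖ ≤ ‖fun j => A j t‖ + ‖(fun j => Aseq k j t) - (fun j => A j t)‖ :=
      norm_le_insert' _ _
    _ ≤ CA + 1 := add_le_add (hCA t ht) (hk₁ t ht)
  have hforcing : r * ‖L‖ * ‖(fun j => Aseq k j t) - (fun j => A j t)‖ * ‖derivJet r y t‖ ≤ ε :=
    calc _ = ‖(fun j => Aseq k j t) - (fun j => A j t)‖ * (r * ‖L‖ * ‖derivJet r y t‖) := by ring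
      _ ≤ ε / (r * ‖L‖ * CY + 1) * (r * ‖L‖ * CY) := by gcongr; exacts [hkε t ht, hCY t ht]
      _ ≤ ε := by rw [div_mul_eq_mul_div, div_le_iff₀ (by positivity)]; nlinarith
  refine (norm_deriv_derivJet_sub_le_of_linearODE L (hyseq k) hy (hodeseq k t ht)
    (hode t ht)).trans ?_
  gcongr

theorem tendstoUniformlyOn_derivJet_of_linearODE (L : E →L[ℝ] F →L[ℝ] F) {a b : ℝ}
    {A : Fin r → ℝ → E} {Aseq : ℕ → Fin r → ℝ → E}
    (hA : ∀ j, ContinuousOn (A j) (Icc a b))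
    (hAconv : ∀ j, TendstoUniformlyOn (fun k => Aseq k j) (A j) atTop (Icc a b))
    {y : ℝ → F} {yseq : ℕ → ℝ → F} (hy : ContDiff ℝ r y) (hyseq : ∀ k, ContDiff ℝ r (yseq k))
    (hode : ∀ t ∈ Icc a b, iteratedDeriv r y t + ∑ j, L (A j t) (iteratedDeriv j y t) = 0)
    (hodeseq : ∀ k, ∀ t ∈ Icc a b,
      iteratedDeriv r (yseq k) t + ∑ j, L (Aseq k j t) (iteratedDeriv j (yseq k) t) = 0)
    (hinit : ∀ k, derivJet r (yseq k) a = derivJet r y a) :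
    TendstoUniformlyOn (fun k => derivJet r (yseq k)) (derivJet r y) atTop (Icc a b) := by
  obtain ⟨K, hK⟩ :=
    exists_norm_deriv_derivJet_sub_le_of_linearODE L hA hAconv hy hyseq hode hodeseq
  have hdiff := tendstoUniformlyOn_zero_of_norm_deriv_le (g := fun k => derivJet r (yseq k - y))
    (fun k => (continuous_derivJet ((hyseq k).sub hy)).continuousOn)
    (fun k t _ => (hasDerivAt_derivJet ((hyseq k).sub hy) t).hasDerivWithinAt)
    (fun k => by rw [derivJet_sub (hyseq k) hy, hinit k, sub_self])
    (fun ε hε => (hK ε hε).mono fun k hk t ht => hk t (Ico_subset_Icc_self ht))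
  rw [Metric.tendstoUniformlyOn_iff] at hdiff ⊢
  intro ε hε
  filter_upwards [hdiff ε hε] with k hk t ht
  simpa [dist_eq_norm', derivJet_sub (hyseq k) hy] using hk t ht

end LinearODE

section Jet

variable {F : Type*} [NormedAddCommGroup F] [NormedSpace ℝ F] {a b : ℝ} {m r : ℕ}

theorem coe_jetCM_comp (g : F →L[ℝ] (Fin m → ℂ)) {f : ℝ → F} (hf : ContDiff ℝ r f) :
    ⇑(jetCM a b r fun t => g (f t)) = fun t p => g (derivJet r f t.1 p.1) p.2 := by
  have hjet : (fun (t : Icc a b) (p : Fin r × Fin m) =>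
      iteratedDeriv p.1 (fun s => g (f s)) t.1 p.2) = fun t p => g (derivJet r f t.1 p.1) p.2 := by
    funext t p
    exact congrFun (g.iteratedDeriv_comp_left_s12 hf.contDiffAt (by exact_mod_cast p.1.isLt.le)) p.2
  have hcont :
      Continuous fun (t : Icc a b) (p : Fin r × Fin m) => g (derivJet r f t.1 p.1) p.2 := by
    have := continuous_derivJet hf
    fun_prop
  rw [jetCM, dif_pos (hjet ▸ hcont)]
  exact hjet

theorem tendsto_jetCM_comp (g : F →L[ℝ] (Fin m → ℂ)) {f : ℝ → F} {fseq : ℕ → ℝ → F}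
    (hf : ContDiff ℝ r f) (hfseq : ∀ k, ContDiff ℝ r (fseq k))
    (h : TendstoUniformlyOn (fun k => derivJet r (fseq k)) (derivJet r f) atTop (Icc a b)) :
    Tendsto (fun k => jetCM a b r fun t => g (fseq k t)) atTop
      (𝓝 (jetCM a b r fun t => g (f t))) := by
  rw [ContinuousMap.tendsto_iff_tendstoUniformly]
  simp only [coe_jetCM_comp g hf, coe_jetCM_comp g (hfseq _)]
  have hΦ : UniformContinuous fun (X : Fin r → F) (p : Fin r × Fin m) => g (X p.1) p.2 :=
    uniformContinuous_pi.2 fun p => (Pi.uniformContinuous_proj _ p.2).comp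
      (g.uniformContinuous.comp (Pi.uniformContinuous_proj _ p.1))
  exact hΦ.comp_tendstoUniformly (tendstoUniformlyOn_iff_tendstoUniformly_comp_coe.1 h)

end Jet

theorem ContinuousLinearMap.tendsto_apply_of_tendsto {𝕜 E F : Type*} [NontriviallyNormedField 𝕜]
    [NormedAddCommGroup E] [NormedSpace 𝕜 E] [CompleteSpace E] [NormedAddCommGroup F]
    [NormedSpace 𝕜 F] {g : ℕ → E →L[𝕜] F} {f : E → F}
    (hg : ∀ v, Tendsto (fun k => g k v) atTop (𝓝 (f v))) {u : ℕ → E} {x : E}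
    (hu : Tendsto u atTop (𝓝 x)) :
    Tendsto (fun k => g k (u k)) atTop (𝓝 (f x)) := by
  obtain ⟨C, hC⟩ := banach_steinhaus fun v =>
    (hg v).norm.bddAbove_range.imp fun _ h k => h (mem_range_self k)
  have hsmall : Tendsto (fun k => g k (u k - x)) atTop (𝓝 0) :=
    squeeze_zero_norm (fun k => (g k).le_of_opNorm_le (hC k) _)
      (by simpa using (tendsto_iff_norm_sub_tendsto_zero.1 hu).const_mul C)
  simpa using hsmall.add (hg x)

noncomputable def Matrix.mulCLM (n : Type*) [Fintype n] [DecidableEq n] :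
    Matrix n n ℂ →L[ℝ] Matrix n n ℂ →L[ℝ] Matrix n n ℂ :=
  LinearMap.toContinuousLinearMap
    (LinearMap.toContinuousLinearMap.toLinearMap ∘ₗ LinearMap.mul ℝ _)

noncomputable def Matrix.colCLM {m n : Type*} [Fintype m] [Fintype n] (c : n) :
    Matrix m n ℂ →L[ℝ] (m → ℂ) :=
  ContinuousLinearMap.pi fun v =>
    (ContinuousLinearMap.proj (R := ℝ) (φ := fun _ : n => ℂ) c).comp
      (ContinuousLinearMap.proj (R := ℝ) (φ := fun _ : m => n → ℂ) v)

theorem characteristic_matrices_converge_general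
    (a b : ℝ) (m r l : ℕ)
    (A : Fin r → ℝ → Matrix (Fin m) (Fin m) ℂ) (hA : ∀ j, Continuous (A j))
    (Aseq : ℕ → Fin r → ℝ → Matrix (Fin m) (Fin m) ℂ)
    (hAconv : ∀ j, TendstoUniformlyOn (fun k t => Aseq k j t) (A j)
      Filter.atTop (Set.Icc a b))
    (Y : Fin r → ℝ → Matrix (Fin m) (Fin m) ℂ)
    (Yseq : ℕ → Fin r → ℝ → Matrix (Fin m) (Fin m) ℂ)
    (hYsmooth : ∀ i, ContDiff ℝ r (Y i))
    (hYseqsmooth : ∀ k i, ContDiff ℝ r (Yseq k i))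
    (hYode : ∀ i t, iteratedDeriv r (Y i) t +
        ∑ j : Fin r, A j t * iteratedDeriv (j : ℕ) (Y i) t = 0)
    (hYseqode : ∀ k i t, iteratedDeriv r (Yseq k i) t +
        ∑ j : Fin r, Aseq k j t * iteratedDeriv (j : ℕ) (Yseq k i) t = 0)
    (hYinit : ∀ i j : Fin r,
        iteratedDeriv (j : ℕ) (Y i) a = if i = j then (1 : Matrix (Fin m) (Fin m) ℂ) else 0)
    (hYseqinit : ∀ k, ∀ i j : Fin r,
        iteratedDeriv (j : ℕ) (Yseq k i) a =
          if i = j then (1 : Matrix (Fin m) (Fin m) ℂ) else 0)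
    (B : C(Set.Icc a b, Fin r × Fin m → ℂ) →L[ℂ] (Fin l → ℂ))
    (Bseq : ℕ → C(Set.Icc a b, Fin r × Fin m → ℂ) →L[ℂ] (Fin l → ℂ))
    (hBconv : ∀ u, Filter.Tendsto (fun k => Bseq k u) Filter.atTop (nhds (B u))) :
    ∀ (q : Fin l) (p : Fin r × Fin m),
      Filter.Tendsto (fun k => charMatrix a b (Bseq k) (Yseq k) q p)
        Filter.atTop (nhds (charMatrix a b B Y q p)) := by
  intro q p
  have hjet : TendstoUniformlyOn (fun k => derivJet r (Yseq k p.1)) (derivJet r (Y p.1))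
      atTop (Icc a b) :=
    tendstoUniformlyOn_derivJet_of_linearODE (Matrix.mulCLM (Fin m)) (fun j => (hA j).continuousOn)
      hAconv (hYsmooth p.1) (fun k => hYseqsmooth k p.1)
      (fun t _ => hYode p.1 t) (fun k t _ => hYseqode k p.1 t)
      (fun k => funext fun j => (hYseqinit k p.1 j).trans (hYinit p.1 j).symm)
  have hcol := tendsto_jetCM_comp (Matrix.colCLM p.2) (hYsmooth p.1)
    (fun k => hYseqsmooth k p.1) hjet
  exact tendsto_pi_nhds.1 (ContinuousLinearMap.tendsto_apply_of_tendsto hBconv hcol) q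

/-- If the coefficients `A_j(·,k)` converge uniformly on `[a,b]` to `A_j` and the
continuous linear boundary operators `B_k` converge strongly to `B`, then the
characteristic matrices built from the fundamental solutions `Y_i(·,k)` and `B_k`
converge entrywise to the characteristic matrix built from `Y_i` and `B`. -/
theorem characteristic_matrices_converge
    (a b : ℝ) (hab : a < b) (m r l : ℕ) (hm : 0 < m) (hr : 0 < r) (hl : 0 < l)
    (A : Fin r → ℝ → Matrix (Fin m) (Fin m) ℂ) (hA : ∀ j, Continuous (A j))
    (Aseq : ℕ → Fin r → ℝ → Matrix (Fin m) (Fin m) ℂ)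
    (hAseq : ∀ k j, Continuous (Aseq k j))
    (hAconv : ∀ j, TendstoUniformlyOn (fun k t => Aseq k j t) (A j)
      Filter.atTop (Set.Icc a b))
    (Y : Fin r → ℝ → Matrix (Fin m) (Fin m) ℂ)
    (Yseq : ℕ → Fin r → ℝ → Matrix (Fin m) (Fin m) ℂ)
    (hYsmooth : ∀ i, ContDiff ℝ r (Y i))
    (hYseqsmooth : ∀ k i, ContDiff ℝ r (Yseq k i))
    (hYode : ∀ i t, iteratedDeriv r (Y i) t +
        ∑ j : Fin r, A j t * iteratedDeriv (j : ℕ) (Y i) t = 0)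
    (hYseqode : ∀ k i t, iteratedDeriv r (Yseq k i) t +
        ∑ j : Fin r, Aseq k j t * iteratedDeriv (j : ℕ) (Yseq k i) t = 0)
    (hYinit : ∀ i j : Fin r,
        iteratedDeriv (j : ℕ) (Y i) a = if i = j then (1 : Matrix (Fin m) (Fin m) ℂ) else 0)
    (hYseqinit : ∀ k, ∀ i j : Fin r,
        iteratedDeriv (j : ℕ) (Yseq k i) a =
          if i = j then (1 : Matrix (Fin m) (Fin m) ℂ) else 0)
    (B : C(Set.Icc a b, Fin r × Fin m → ℂ) →L[ℂ] (Fin l → ℂ))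
    (Bseq : ℕ → C(Set.Icc a b, Fin r × Fin m → ℂ) →L[ℂ] (Fin l → ℂ))
    (hBconv : ∀ u, Filter.Tendsto (fun k => Bseq k u) Filter.atTop (nhds (B u))) :
    ∀ (q : Fin l) (p : Fin r × Fin m),
      Filter.Tendsto (fun k => charMatrix a b (Bseq k) (Yseq k) q p)
        Filter.atTop (nhds (charMatrix a b B Y q p)) :=
  characteristic_matrices_converge_general a b m r l A hA Aseq hAconv Y Yseq hYsmooth hYseqsmooth
    hYode hYseqode hYinit hYseqinit B Bseq hBconv
end
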